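/- arXiv:1802.01254 — 5 statements merged into one kernel-verified Lean document; each statement's English description precedes it below -/
import Mathlib

section
/- (Boundedness and concavity of the steady-state footprint) For every trace of length n with m distinct data items: (i) 0 < ss-fp(x) ≤ m for every integer x ≥ 0; (ii) ss-fp is non-decreasing: ss-fp(x) ≤ ss-fp(x+1) for all x ≥ 0; and (iii) ss-fp is concave: ss-fp(x+2) − ss-fp(x+1) ≤ ss-fp(x+1) − ss-fp(x) for all x ≥ 0. -/
open Finset

/-- The data set of a trace `a` of length `n` (indices 1..n). -/
def dataSet (a : ℕ → ℕ) (n : ℕ) : Finset ℕ := (Finset.Icc 1 n).image a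

/-- A trace is address-independent: data items are numbered in order of first appearance. -/
def isAI (a : ℕ → ℕ) (n : ℕ) : Prop :=
  ∀ t ∈ Finset.Icc 1 n, 1 ≤ a t ∧ a t ≤ 1 + ((Finset.Ico 1 t).image a).card

/-- Indices `s < t` (with `s ≥ 1`) accessing the same datum as `t`. -/
def prevSet (a : ℕ → ℕ) (t : ℕ) : Finset ℕ :=
  (Finset.Ico 1 t).filter (fun s => a s = a t)

/-- Reuse time of access `t`: `t - s*` where `s*` is the previous access to the same
datum, or `⊤` for a first access. -/
def reuseTime (a : ℕ → ℕ) (t : ℕ) : ℕ∞ :=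
  if h : (prevSet a t).Nonempty then ((t - (prevSet a t).max' h : ℕ) : ℕ∞) else ⊤

/-- Reuse distance of access `t`: the number of distinct data accessed in
`a(s*+1), …, a(t)` where `s*` is the previous access to the same datum,
or `⊤` for a first access. -/
def reuseDist (a : ℕ → ℕ) (t : ℕ) : ℕ∞ :=
  if h : (prevSet a t).Nonempty then
    ((((Finset.Icc ((prevSet a t).max' h + 1) t).image a).card : ℕ) : ℕ∞)
  else ⊤

/-- Reuse-time histogram: number of accesses whose reuse time equals `i`. -/
def rtHist (a : ℕ → ℕ) (n i : ℕ) : ℕ :=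
  ((Finset.Icc 1 n).filter (fun t => reuseTime a t = (i : ℕ∞))).card

/-- Reuse-distance histogram: number of accesses whose reuse distance equals `v`. -/
def rdHist (a : ℕ → ℕ) (n v : ℕ) : ℕ :=
  ((Finset.Icc 1 n).filter (fun t => reuseDist a t = (v : ℕ∞))).card

/-- First access time of datum `e`. -/
noncomputable def firstAcc (a : ℕ → ℕ) (n e : ℕ) : ℕ :=
  sInf {t | t ∈ Finset.Icc 1 n ∧ a t = e}

/-- Last access time of datum `e`. -/
noncomputable def lastAcc (a : ℕ → ℕ) (n e : ℕ) : ℕ :=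
  sSup {t | t ∈ Finset.Icc 1 n ∧ a t = e}

/-- The sorted list of access times of datum `e` in the trace. -/
def occList (a : ℕ → ℕ) (n e : ℕ) : List ℕ :=
  ((Finset.Icc 1 n).filter (fun t => a t = e)).sort (· ≤ ·)

/-- Working-set size `ω(t,x)`: distinct data accessed in the window `a(t-x+1), …, a(t)`. -/
def wss (a : ℕ → ℕ) (t x : ℕ) : ℕ := ((Finset.Icc (t - x + 1) t).image a).card

/-- Footprint: the average working-set size over all length-`x` windows. -/
def fp (a : ℕ → ℕ) (n x : ℕ) : ℚ :=
  (∑ t ∈ Finset.Icc x n, (wss a t x : ℚ)) / ((n : ℚ) - (x : ℚ) + 1)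

/-- Total working-set size `W(x) = Σ_{t=x}^{n} ω(t,x)`, with `W(0) = 0`. -/
def totalW (a : ℕ → ℕ) (n x : ℕ) : ℤ :=
  if x = 0 then 0 else ∑ t ∈ Finset.Icc x n, (wss a t x : ℤ)

/-- Steady-state footprint `ss-fp(x) = m - (1/n) Σ_{i=x+1}^{n-1} (i-x)·rt(i)`. -/
def ssfp (a : ℕ → ℕ) (n x : ℕ) : ℚ :=
  ((dataSet a n).card : ℚ)
    - (1 / (n : ℚ)) * ∑ i ∈ Finset.Icc (x + 1) (n - 1), ((i : ℚ) - (x : ℚ)) * (rtHist a n i : ℚ)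


/-- The previous-access time of `t` (0 if none). -/
noncomputable def prevTime (a : ℕ → ℕ) (t : ℕ) : ℕ :=
  if h : (prevSet a t).Nonempty then (prevSet a t).max' h else 0

/-- The finite reuse-time value of `t` (0 if first access). -/
noncomputable def rval (a : ℕ → ℕ) (t : ℕ) : ℕ := t - prevTime a t

lemma prevTime_mem (a : ℕ → ℕ) (t : ℕ) (h : (prevSet a t).Nonempty) :
    prevTime a t ∈ prevSet a t := by
  rw [prevTime, dif_pos h]; exact (prevSet a t).max'_mem h

lemma prevTime_bounds (a : ℕ → ℕ) (t : ℕ) (h : (prevSet a t).Nonempty) :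
    1 ≤ prevTime a t ∧ prevTime a t < t := by
  have := prevTime_mem a t h
  rw [prevSet, Finset.mem_filter, Finset.mem_Ico] at this
  exact ⟨this.1.1, this.1.2⟩

lemma sumA (a : ℕ → ℕ) (n : ℕ) (hn : 1 ≤ n) :
    ∑ i ∈ Finset.Icc 1 (n - 1), i * rtHist a n i
      = ∑ t ∈ (Finset.Icc 1 n).filter (fun t => (prevSet a t).Nonempty), rval a t := by
  set T := (Finset.Icc 1 n).filter (fun t => (prevSet a t).Nonempty) with hT
  have hmaps : ∀ t ∈ T, rval a t ∈ Finset.Icc 1 (n - 1) := by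
    intro t ht
    rw [hT, Finset.mem_filter, Finset.mem_Icc] at ht
    obtain ⟨⟨h1, h2⟩, hne⟩ := ht
    have hb := prevTime_bounds a t hne
    rw [Finset.mem_Icc, rval]
    omega
  rw [← Finset.sum_fiberwise_of_maps_to hmaps (rval a)]
  apply Finset.sum_congr rfl
  intro i _
  have hset : (Finset.Icc 1 n).filter (fun t => reuseTime a t = (i : ℕ∞))
      = T.filter (fun t => rval a t = i) := by
    rw [hT, Finset.filter_filter]
    apply Finset.filter_congr
    intro t _
    simp only [reuseTime]
    by_cases h : (prevSet a t).Nonempty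
    · rw [dif_pos h]
      rw [rval, prevTime, dif_pos h]
      constructor
      · intro he; exact ⟨h, by exact_mod_cast he⟩
      · intro he; exact_mod_cast he.2
    · rw [dif_neg h]
      simp [h]
  rw [rtHist, hset]
  rw [Finset.sum_congr rfl (fun t ht => (Finset.mem_filter.mp ht).2)]
  simp [mul_comm]

lemma sumB (a : ℕ → ℕ) (n : ℕ) :
    ∑ t ∈ (Finset.Icc 1 n).filter (fun t => (prevSet a t).Nonempty), rval a t
      ≤ (dataSet a n).card * (n - 1) := by
  set T := (Finset.Icc 1 n).filter (fun t => (prevSet a t).Nonempty) with hT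
  have hmaps : ∀ t ∈ T, a t ∈ dataSet a n := by
    intro t ht
    exact Finset.mem_image_of_mem a (Finset.mem_of_mem_filter t ht)
  rw [← Finset.sum_fiberwise_of_maps_to hmaps (rval a)]
  have hinner : ∀ e ∈ dataSet a n,
      ∑ t ∈ T.filter (fun t => a t = e), rval a t ≤ n - 1 := by
    intro e _
    set Te := T.filter (fun t => a t = e) with hTe
    have hTe_mem : ∀ t ∈ Te, t ∈ Finset.Icc 1 n ∧ (prevSet a t).Nonempty ∧ a t = e := by
      intro t ht
      rw [hTe, Finset.mem_filter, hT, Finset.mem_filter] at ht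
      exact ⟨ht.1.1, ht.1.2, ht.2⟩
    have hr : ∀ t ∈ Te, rval a t = (Finset.Ioc (prevTime a t) t).card := by
      intro t _
      rw [Nat.card_Ioc, rval]
    rw [Finset.sum_congr rfl hr]
    have hdisj : ∀ t₁ ∈ Te, ∀ t₂ ∈ Te, t₁ ≠ t₂ →
        Disjoint (Finset.Ioc (prevTime a t₁) t₁) (Finset.Ioc (prevTime a t₂) t₂) := by
      have key : ∀ t₁ ∈ Te, ∀ t₂ ∈ Te, t₁ < t₂ →
          Disjoint (Finset.Ioc (prevTime a t₁) t₁) (Finset.Ioc (prevTime a t₂) t₂) := by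
        intro t₁ h₁ t₂ h₂ hlt
        obtain ⟨hm1, hne1, he1⟩ := hTe_mem t₁ h₁
        obtain ⟨hm2, hne2, he2⟩ := hTe_mem t₂ h₂
        rw [Finset.mem_Icc] at hm1 hm2
        have ht1mem : t₁ ∈ prevSet a t₂ := by
          rw [prevSet, Finset.mem_filter, Finset.mem_Ico]
          exact ⟨⟨hm1.1, hlt⟩, he1.trans he2.symm⟩
        have hle : t₁ ≤ prevTime a t₂ := by
          rw [prevTime, dif_pos hne2]
          exact (prevSet a t₂).le_max' t₁ ht1mem
        rw [Finset.disjoint_left]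
        intro u hu1 hu2
        rw [Finset.mem_Ioc] at hu1 hu2
        omega
      intro t₁ h₁ t₂ h₂ hne
      rcases lt_or_gt_of_ne hne with h | h
      · exact key t₁ h₁ t₂ h₂ h
      · exact (key t₂ h₂ t₁ h₁ h).symm
    rw [← Finset.card_biUnion hdisj]
    have hsub : Te.biUnion (fun t => Finset.Ioc (prevTime a t) t) ⊆ Finset.Icc 2 n := by
      intro u hu
      rw [Finset.mem_biUnion] at hu
      obtain ⟨t, ht, hut⟩ := hu
      obtain ⟨hm, hne, _⟩ := hTe_mem t ht
      rw [Finset.mem_Icc] at hm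
      have hb := prevTime_bounds a t hne
      rw [Finset.mem_Ioc] at hut
      rw [Finset.mem_Icc]
      omega
    calc (Te.biUnion (fun t => Finset.Ioc (prevTime a t) t)).card
        ≤ (Finset.Icc 2 n).card := Finset.card_le_card hsub
      _ = n - 1 := by rw [Nat.card_Icc]; omega
  calc ∑ e ∈ dataSet a n, ∑ t ∈ T.filter (fun t => a t = e), rval a t
      ≤ ∑ _e ∈ dataSet a n, (n - 1) := Finset.sum_le_sum hinner
    _ = (dataSet a n).card * (n - 1) := by rw [Finset.sum_const, smul_eq_mul]

lemma ssfp_step (a : ℕ → ℕ) (n x : ℕ) :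
    ssfp a n (x + 1) - ssfp a n x
      = (1 / (n : ℚ)) * ∑ i ∈ Finset.Icc (x + 1) (n - 1), (rtHist a n i : ℚ) := by
  have key : ∑ i ∈ Finset.Icc (x + 1) (n - 1), ((i : ℚ) - (x : ℚ)) * (rtHist a n i : ℚ)
      = (∑ i ∈ Finset.Icc (x + 2) (n - 1), ((i : ℚ) - ((x : ℚ) + 1)) * (rtHist a n i : ℚ))
        + ∑ i ∈ Finset.Icc (x + 1) (n - 1), (rtHist a n i : ℚ) := by
    have h1 : ∑ i ∈ Finset.Icc (x + 2) (n - 1), ((i : ℚ) - ((x : ℚ) + 1)) * (rtHist a n i : ℚ)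
        = ∑ i ∈ Finset.Icc (x + 1) (n - 1), ((i : ℚ) - ((x : ℚ) + 1)) * (rtHist a n i : ℚ) := by
      apply Finset.sum_subset
      · exact Finset.Icc_subset_Icc_left (by omega)
      · intro i hi hni
        rw [Finset.mem_Icc] at hi
        rw [Finset.mem_Icc] at hni
        have : i = x + 1 := by omega
        subst this
        push_cast
        ring
    rw [h1, ← Finset.sum_add_distrib]
    apply Finset.sum_congr rfl
    intro i _
    ring
  unfold ssfp
  push_cast
  rw [key]
  ring

/-- Boundedness and concavity of the steady-state footprint. -/
theorem ssfp_bounded_and_concave (n m : ℕ) (a : ℕ → ℕ) (hn : 1 ≤ n)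
    (hm : (dataSet a n).card = m) :
    (∀ x : ℕ, 0 < ssfp a n x ∧ ssfp a n x ≤ (m : ℚ))
    ∧ (∀ x : ℕ, ssfp a n x ≤ ssfp a n (x + 1))
    ∧ (∀ x : ℕ, ssfp a n (x + 2) - ssfp a n (x + 1) ≤ ssfp a n (x + 1) - ssfp a n x) := by
  have hn0 : (0 : ℚ) < (n : ℚ) := by exact_mod_cast hn
  have hm1 : 1 ≤ m := by
    rw [← hm]
    have : a 1 ∈ dataSet a n := Finset.mem_image_of_mem a (by simp [Finset.mem_Icc, hn])
    exact Finset.card_pos.mpr ⟨a 1, this⟩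
  -- nonnegativity of each histogram term on Icc (x+1) (n-1)
  have hterm : ∀ x : ℕ, ∀ i ∈ Finset.Icc (x + 1) (n - 1),
      (0 : ℚ) ≤ ((i : ℚ) - (x : ℚ)) * (rtHist a n i : ℚ) := by
    intro x i hi
    rw [Finset.mem_Icc] at hi
    have : (x : ℚ) + 1 ≤ (i : ℚ) := by exact_mod_cast hi.1
    have h2 : (0 : ℚ) ≤ (rtHist a n i : ℚ) := Nat.cast_nonneg _
    nlinarith
  -- bound on the sums
  have hSbound : ∀ x : ℕ,
      ∑ i ∈ Finset.Icc (x + 1) (n - 1), ((i : ℚ) - (x : ℚ)) * (rtHist a n i : ℚ)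
        ≤ (m : ℚ) * ((n : ℚ) - 1) := by
    intro x
    have step1 : ∑ i ∈ Finset.Icc (x + 1) (n - 1), ((i : ℚ) - (x : ℚ)) * (rtHist a n i : ℚ)
        ≤ ∑ i ∈ Finset.Icc (x + 1) (n - 1), (i : ℚ) * (rtHist a n i : ℚ) := by
      apply Finset.sum_le_sum
      intro i _
      have h2 : (0 : ℚ) ≤ (rtHist a n i : ℚ) := Nat.cast_nonneg _
      have h3 : (i : ℚ) - (x : ℚ) ≤ (i : ℚ) := by
        have : (0 : ℚ) ≤ (x : ℚ) := Nat.cast_nonneg _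
        linarith
      exact mul_le_mul_of_nonneg_right h3 h2
    have step2 : ∑ i ∈ Finset.Icc (x + 1) (n - 1), (i : ℚ) * (rtHist a n i : ℚ)
        ≤ ∑ i ∈ Finset.Icc 1 (n - 1), (i : ℚ) * (rtHist a n i : ℚ) := by
      apply Finset.sum_le_sum_of_subset_of_nonneg
      · exact Finset.Icc_subset_Icc_left (by omega)
      · intro i _ _
        positivity
    have step3 : ∑ i ∈ Finset.Icc 1 (n - 1), (i : ℚ) * (rtHist a n i : ℚ)
        ≤ (m : ℚ) * ((n : ℚ) - 1) := by
      have hnat : ∑ i ∈ Finset.Icc 1 (n - 1), i * rtHist a n i ≤ m * (n - 1) := by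
        rw [sumA a n hn, ← hm]
        exact sumB a n
      have hcast : ∑ i ∈ Finset.Icc 1 (n - 1), (i : ℚ) * (rtHist a n i : ℚ)
          = ((∑ i ∈ Finset.Icc 1 (n - 1), i * rtHist a n i : ℕ) : ℚ) := by
        push_cast
        rfl
      rw [hcast]
      have h2 : ((m * (n - 1) : ℕ) : ℚ) = (m : ℚ) * ((n : ℚ) - 1) := by
        have : ((n - 1 : ℕ) : ℚ) = (n : ℚ) - 1 := by
          have := Nat.cast_sub hn (R := ℚ)
          simpa using this
        rw [Nat.cast_mul, this]
      rw [← h2]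
      exact_mod_cast hnat
    linarith
  refine ⟨?_, ?_, ?_⟩
  · intro x
    constructor
    · have hlb : (m : ℚ) - (1 / (n : ℚ)) * ((m : ℚ) * ((n : ℚ) - 1)) ≤ ssfp a n x := by
        rw [ssfp, hm]
        have := hSbound x
        have hpos : (0 : ℚ) ≤ 1 / (n : ℚ) := by positivity
        nlinarith [mul_le_mul_of_nonneg_left (hSbound x) hpos]
      have heq : (m : ℚ) - (1 / (n : ℚ)) * ((m : ℚ) * ((n : ℚ) - 1)) = (m : ℚ) / (n : ℚ) := by
        field_simp
        ring
      have hm0 : (0 : ℚ) < (m : ℚ) := by exact_mod_cast hm1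
      have : (0 : ℚ) < (m : ℚ) / (n : ℚ) := by positivity
      linarith [heq ▸ hlb]
    · rw [ssfp, hm]
      have hS0 : (0 : ℚ) ≤ ∑ i ∈ Finset.Icc (x + 1) (n - 1),
          ((i : ℚ) - (x : ℚ)) * (rtHist a n i : ℚ) :=
        Finset.sum_nonneg (hterm x)
      have hpos : (0 : ℚ) ≤ 1 / (n : ℚ) := by positivity
      nlinarith
  · intro x
    have := ssfp_step a n x
    have hR : (0 : ℚ) ≤ ∑ i ∈ Finset.Icc (x + 1) (n - 1), (rtHist a n i : ℚ) :=
      Finset.sum_nonneg (fun i _ => Nat.cast_nonneg _)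
    have hpos : (0 : ℚ) ≤ 1 / (n : ℚ) := by positivity
    nlinarith
  · intro x
    rw [ssfp_step a n x, ssfp_step a n (x + 1)]
    have hsub : ∑ i ∈ Finset.Icc (x + 1 + 1) (n - 1), (rtHist a n i : ℚ)
        ≤ ∑ i ∈ Finset.Icc (x + 1) (n - 1), (rtHist a n i : ℚ) := by
      apply Finset.sum_le_sum_of_subset_of_nonneg
      · exact Finset.Icc_subset_Icc_left (by omega)
      · intro i _ _
        exact Nat.cast_nonneg _
    have hpos : (0 : ℚ) ≤ 1 / (n : ℚ) := by positivity
    nlinarith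
end

section
/- (Shape of the steady-state footprint) For every trace of length n with m distinct data items, the steady-state footprint is strictly increasing until it reaches m, and constant afterwards: for every integer x ≥ 0, if ss-fp(x) < m then ss-fp(x) < ss-fp(x+1), and if ss-fp(x) = m then ss-fp(y) = m for all y ≥ x; moreover ss-fp(x) = m for all x ≥ n−1. -/
open Finset

/-- Shape of the steady-state footprint: strictly increasing until it reaches m,
constant afterwards, and equal to m for all x ≥ n − 1. -/
theorem ssfp_shape (n m : ℕ) (a : ℕ → ℕ) (hm : (dataSet a n).card = m) :
    (∀ x : ℕ,
      (ssfp a n x < (m : ℚ) → ssfp a n x < ssfp a n (x + 1))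
      ∧ (ssfp a n x = (m : ℚ) → ∀ y : ℕ, x ≤ y → ssfp a n y = (m : ℚ)))
    ∧ (∀ x : ℕ, n - 1 ≤ x → ssfp a n x = (m : ℚ)) := by
  set S : ℕ → ℚ := fun x =>
    ∑ i ∈ Finset.Icc (x + 1) (n - 1), ((i : ℚ) - (x : ℚ)) * (rtHist a n i : ℚ) with hS
  have hSdef : ∀ x, ssfp a n x = (m : ℚ) - (1 / (n : ℚ)) * S x := by
    intro x; simp only [ssfp, hm, hS]
  have hnonneg : ∀ x, 0 ≤ S x := by
    intro x
    apply Finset.sum_nonneg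
    intro i hi
    simp only [Finset.mem_Icc] at hi
    have h1 : (x : ℚ) + 1 ≤ (i : ℚ) := by exact_mod_cast hi.1
    have h2 : (0 : ℚ) ≤ (rtHist a n i : ℚ) := Nat.cast_nonneg _
    nlinarith
  have hzero : ∀ x, S x = 0 → ∀ y, x ≤ y → S y = 0 := by
    intro x hx y hxy
    have hterms := (Finset.sum_eq_zero_iff_of_nonneg (by
      intro i hi
      simp only [Finset.mem_Icc] at hi
      have h1 : (x : ℚ) + 1 ≤ (i : ℚ) := by exact_mod_cast hi.1
      have h2 : (0 : ℚ) ≤ (rtHist a n i : ℚ) := Nat.cast_nonneg _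
      nlinarith)).mp hx
    apply Finset.sum_eq_zero
    intro i hi
    simp only [Finset.mem_Icc] at hi
    have hi' : i ∈ Finset.Icc (x + 1) (n - 1) := by
      simp only [Finset.mem_Icc]; omega
    have ht := hterms i hi'
    have h1 : (x : ℚ) + 1 ≤ (i : ℚ) := by
      have : x + 1 ≤ i := by omega
      exact_mod_cast this
    rcases mul_eq_zero.mp ht with h | h
    · exfalso; nlinarith
    · rw [h, mul_zero]
  have hstep : ∀ x, S x - S (x + 1) =
      ∑ i ∈ Finset.Icc (x + 1) (n - 1), (rtHist a n i : ℚ) := by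
    intro x
    have h1 : S (x + 1) =
        ∑ i ∈ Finset.Icc (x + 1) (n - 1), ((i : ℚ) - ((x + 1 : ℕ) : ℚ)) * (rtHist a n i : ℚ) := by
      apply Finset.sum_subset
      · apply Finset.Icc_subset_Icc_left; omega
      · intro i hi hni
        simp only [Finset.mem_Icc] at hi hni
        have : i = x + 1 := by omega
        subst this
        push_cast
        ring
    rw [h1, ← Finset.sum_sub_distrib]
    apply Finset.sum_congr rfl
    intro i _
    push_cast
    ring
  have hempty : ∀ x, n - 1 ≤ x → S x = 0 := by
    intro x hx
    have he : Finset.Icc (x + 1) (n - 1) = ∅ := Finset.Icc_eq_empty (by omega)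
    simp only [hS, he, Finset.sum_empty]
  constructor
  · intro x
    constructor
    · intro hlt
      rw [hSdef] at hlt
      have hx : 0 < (1 / (n : ℚ)) * S x := by linarith
      have hn : 0 < (n : ℚ) := by
        rcases Nat.eq_zero_or_pos n with h | h
        · exfalso; subst h; simp at hx
        · exact_mod_cast h
      have h1n : 0 < 1 / (n : ℚ) := by positivity
      have hSx : 0 < S x := by
        by_contra h
        push_neg at h
        have h0 : S x = 0 := le_antisymm h (hnonneg x)
        rw [h0, mul_zero] at hx
        exact lt_irrefl 0 hx
      set T := ∑ i ∈ Finset.Icc (x + 1) (n - 1), (rtHist a n i : ℚ) with hT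
      have hST : S x ≤ (n : ℚ) * T := by
        rw [hT, Finset.mul_sum, hS]
        apply Finset.sum_le_sum
        intro i hi
        simp only [Finset.mem_Icc] at hi
        have hi2 : i + 1 ≤ n := by omega
        have h2 : (i : ℚ) + 1 ≤ (n : ℚ) := by exact_mod_cast hi2
        have h3 : (0 : ℚ) ≤ (rtHist a n i : ℚ) := Nat.cast_nonneg _
        nlinarith
      have hTpos : 0 < T := by nlinarith
      have hS1 : S (x + 1) = S x - T := by
        have := hstep x; rw [← hT] at this; linarith
      rw [hSdef, hSdef, hS1, mul_sub]
      have := mul_pos h1n hTpos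
      linarith
    · intro heq y hxy
      rw [hSdef] at heq ⊢
      rcases eq_or_ne (n : ℚ) 0 with h | h
      · rw [h] at heq ⊢; simp
      · have h' : (1 / (n : ℚ)) * S x = 0 := by linarith
        have h1n : (1 / (n : ℚ)) ≠ 0 := by
          simp [h]
        have hSx : S x = 0 := by
          rcases mul_eq_zero.mp h' with h'' | h''
          · exact absurd h'' h1n
          · exact h''
        rw [hzero x hSx y hxy, mul_zero, sub_zero]
  · intro x hx
    rw [hSdef, hempty x hx, mul_zero, sub_zero]
end

section
/- (The Denning–Schwartz steady-state footprint overestimates the footprint) For every trace of length n with m distinct data items and every window length x with 1 ≤ x ≤ n, fp(x) ≤ ss-fp(x). -/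
open Finset

/-! If access `t` has previous access `s` to the same datum and the window `[u - x + 1, u]`
lies strictly between `s` and `t`, then `a t` is missing from that window, and `t` is recovered
from `u` and `a t` as the next access to `a t` after `u`. An access with reuse time `i > x` has
exactly `i - x` such windows, so `Σ (i - x) rt(i)` is at most the number of pairs (window `u`,
datum of `M` missing from it), which is `Σ_u (m - ω(u, x))`. Hence
`Σ (i - x) rt(i) + Σ_u ω(u, x) ≤ (n - x + 1) m`, that is
`fp(x) ≤ m - Σ (i - x) rt(i) / (n - x + 1)`, and `n - x + 1 ≤ n` as `x ≥ 1`. -/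

/-- The right ends `u` of the windows `[u - x + 1, u]` lying strictly between access `t` and the
previous access to `a t`. -/
def gapWindowEnds (a : ℕ → ℕ) (x t : ℕ) : Finset ℕ :=
  if h : (prevSet a t).Nonempty then Icc ((prevSet a t).max' h + x) (t - 1) else ∅

section
variable {a : ℕ → ℕ} {x t u : ℕ}

lemma mem_prevSet {s : ℕ} : s ∈ prevSet a t ↔ 1 ≤ s ∧ s < t ∧ a s = a t := by
  simp [prevSet, and_assoc]

lemma mem_gapWindowEnds :
    u ∈ gapWindowEnds a x t ↔
      ∃ h : (prevSet a t).Nonempty, (prevSet a t).max' h + x ≤ u ∧ u < t := by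
  unfold gapWindowEnds
  split_ifs with h
  · have := mem_prevSet.1 ((prevSet a t).max'_mem h)
    simp only [mem_Icc, h, exists_true_left]
    omega
  · simp [h]

lemma reuseTime_eq_coe_iff {j : ℕ} :
    reuseTime a t = j ↔ ∃ h : (prevSet a t).Nonempty, t - (prevSet a t).max' h = j := by
  unfold reuseTime
  split_ifs with h
  · simp only [h, exists_true_left]
    norm_cast
  · simp [h]

lemma card_gapWindowEnds_of_reuseTime_eq {j : ℕ} (hj : reuseTime a t = j) :
    #(gapWindowEnds a x t) = j - x := by
  obtain ⟨h, rfl⟩ := reuseTime_eq_coe_iff.1 hj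
  have := mem_prevSet.1 ((prevSet a t).max'_mem h)
  rw [gapWindowEnds, dif_pos h, Nat.card_Icc]
  omega

lemma gapWindowEnds_subset_Icc {n : ℕ} (ht : t ≤ n) : gapWindowEnds a x t ⊆ Icc x n := by
  intro u hu
  obtain ⟨h, hsu, hut⟩ := mem_gapWindowEnds.1 hu
  rw [mem_Icc]
  omega

lemma gapWindowEnds_of_reuseTime_eq_top (h : reuseTime a t = ⊤) : gapWindowEnds a x t = ∅ := by
  unfold reuseTime at h
  rw [gapWindowEnds, dif_neg (by rintro hne; simp [hne] at h)]

lemma notMem_image_window_of_mem_gapWindowEnds (hu : u ∈ gapWindowEnds a x t) :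
    a t ∉ (Icc (u - x + 1) u).image a := by
  obtain ⟨h, hsu, hut⟩ := mem_gapWindowEnds.1 hu
  simp only [mem_image, mem_Icc, not_exists, not_and]
  intro v hv hav
  have := (prevSet a t).le_max' v (mem_prevSet.2 ⟨by omega, by omega, hav⟩)
  omega

lemma le_of_mem_gapWindowEnds {t' : ℕ} (hu : u ∈ gapWindowEnds a x t)
    (hu' : u ∈ gapWindowEnds a x t') (ha : a t = a t') : t' ≤ t := by
  obtain ⟨-, -, hut⟩ := mem_gapWindowEnds.1 hu
  obtain ⟨h', hsu', -⟩ := mem_gapWindowEnds.1 hu'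
  by_contra! htt'
  have := (prevSet a t').le_max' t (mem_prevSet.2 ⟨by omega, htt', ha⟩)
  omega

end

lemma sum_mul_rtHist_eq_sum_card_gapWindowEnds (a : ℕ → ℕ) (n x : ℕ) :
    ∑ i ∈ Icc (x + 1) (n - 1), (i - x) * rtHist a n i
      = ∑ t ∈ Icc 1 n, #(gapWindowEnds a x t) := by
  simp only [rtHist, card_filter, mul_sum, mul_ite, mul_one, mul_zero]
  rw [sum_comm]
  refine sum_congr rfl fun t ht => ?_
  cases hrt : reuseTime a t using ENat.recTopCoe with
  | top => simp [gapWindowEnds_of_reuseTime_eq_top hrt]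
  | coe j =>
    obtain ⟨h, hj⟩ := reuseTime_eq_coe_iff.1 hrt
    have := mem_prevSet.1 ((prevSet a t).max'_mem h)
    simp only [Nat.cast_inj, sum_ite_eq, mem_Icc, card_gapWindowEnds_of_reuseTime_eq hrt]
    rw [mem_Icc] at ht
    split_ifs <;> omega

lemma card_filter_mem_gapWindowEnds_le (a : ℕ → ℕ) (n x u : ℕ) :
    #((Icc 1 n).filter fun t => u ∈ gapWindowEnds a x t)
      ≤ #(dataSet a n \ (Icc (u - x + 1) u).image a) := by
  refine card_le_card_of_injOn a (fun t ht => ?_) fun t ht t' ht' ha => ?_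
  · simp only [coe_filter, Set.mem_ofPred_eq] at ht
    simp only [coe_sdiff, Set.mem_sdiff, mem_coe]
    exact ⟨mem_image_of_mem a ht.1, notMem_image_window_of_mem_gapWindowEnds ht.2⟩
  · simp only [coe_filter, Set.mem_ofPred_eq] at ht ht'
    exact le_antisymm (le_of_mem_gapWindowEnds ht'.2 ht.2 ha.symm)
      (le_of_mem_gapWindowEnds ht.2 ht'.2 ha)

lemma sum_mul_rtHist_add_sum_wss_le (a : ℕ → ℕ) (n x : ℕ) :
    ∑ i ∈ Icc (x + 1) (n - 1), (i - x) * rtHist a n i + ∑ u ∈ Icc x n, wss a u x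
      ≤ (n + 1 - x) * #(dataSet a n) := by
  have hwindow : ∀ u ∈ Icc x n, (Icc (u - x + 1) u).image a ⊆ dataSet a n := fun u hu =>
    image_subset_image (Icc_subset_Icc (by omega) (mem_Icc.1 hu).2)
  calc ∑ i ∈ Icc (x + 1) (n - 1), (i - x) * rtHist a n i + ∑ u ∈ Icc x n, wss a u x
      = ∑ t ∈ Icc 1 n, #((Icc x n).filter (· ∈ gapWindowEnds a x t))
          + ∑ u ∈ Icc x n, wss a u x := by
        rw [sum_mul_rtHist_eq_sum_card_gapWindowEnds]
        congr 1
        refine sum_congr rfl fun t ht => ?_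
        rw [filter_mem_eq_inter, inter_eq_right.2 (gapWindowEnds_subset_Icc (mem_Icc.1 ht).2)]
    _ = ∑ u ∈ Icc x n, #((Icc 1 n).filter fun t => u ∈ gapWindowEnds a x t)
          + ∑ u ∈ Icc x n, wss a u x := by
        congr 1
        exact sum_card_bipartiteAbove_eq_sum_card_bipartiteBelow
          fun t u => u ∈ gapWindowEnds a x t
    _ ≤ ∑ u ∈ Icc x n, (#(dataSet a n \ (Icc (u - x + 1) u).image a) + wss a u x) := by
        rw [sum_add_distrib]
        exact Nat.add_le_add_right
          (sum_le_sum fun u _ => card_filter_mem_gapWindowEnds_le a n x u) _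
    _ = (n + 1 - x) * #(dataSet a n) := by
        rw [sum_congr rfl fun u hu => by rw [wss, card_sdiff_add_card_eq_card (hwindow u hu)],
          sum_const, Nat.card_Icc, smul_eq_mul]

theorem fp_le_ssfp_general (n x : ℕ) (a : ℕ → ℕ)
    (hx1 : 1 ≤ x) (hxn : x ≤ n) :
    fp a n x ≤ ssfp a n x := by
  set S := ∑ i ∈ Icc (x + 1) (n - 1), (i - x) * rtHist a n i
  set W := ∑ u ∈ Icc x n, wss a u x
  have hcount : (S + W : ℚ) ≤ ((n - x + 1 : ℕ) : ℚ) * #(dataSet a n) := by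
    rw [← Nat.sub_add_comm hxn]
    exact_mod_cast sum_mul_rtHist_add_sum_wss_le a n x
  have hS : ∑ i ∈ Icc (x + 1) (n - 1), ((i : ℚ) - x) * rtHist a n i = S := by
    simp only [S, Nat.cast_sum, Nat.cast_mul]
    exact sum_congr rfl fun i hi => by rw [Nat.cast_sub (Nat.le_of_succ_le (mem_Icc.1 hi).1)]
  rw [Nat.cast_add, Nat.cast_sub hxn, Nat.cast_one] at hcount
  set d : ℚ := n - x + 1
  have hd : 0 < d := by
    have : (x : ℚ) ≤ n := by exact_mod_cast hxn
    linarith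
  have hdn : d ≤ n := by
    have : (1 : ℚ) ≤ x := by exact_mod_cast hx1
    linarith
  rw [fp, ssfp, hS, ← Nat.cast_sum]
  calc (W : ℚ) / d ≤ #(dataSet a n) - S / d := by
        rw [div_le_iff₀ hd, sub_mul, div_mul_cancel₀ _ hd.ne']
        linarith
    _ ≤ #(dataSet a n) - 1 / n * S := by
        rw [one_div_mul_eq_div]
        gcongr

/-- The Denning–Schwartz steady-state footprint overestimates the footprint. -/
theorem fp_le_ssfp (n m x : ℕ) (a : ℕ → ℕ) (hm : (dataSet a n).card = m)
    (hx1 : 1 ≤ x) (hxn : x ≤ n) :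
    fp a n x ≤ ssfp a n x :=
  fp_le_ssfp_general n x a hx1 hxn
end

section
/- (Histograms do not determine the trace) There exist two distinct address-independent traces of the same length n over the same number m of data items that have identical reuse-time histograms and identical reuse-distance histograms. (For example a = (1,2,1,2,2,1) and a' = (1,2,2,1,2,1), with n = 6 and m = 2.) -/
open Finset

lemma rtHist_eq_zero_of_gt (a : ℕ → ℕ) (n i : ℕ) (h : n < i) : rtHist a n i = 0 := by
  unfold rtHist
  rw [Finset.card_eq_zero, Finset.filter_eq_empty_iff]
  intro t ht
  rw [Finset.mem_Icc] at ht
  unfold reuseTime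
  split
  · intro hc
    rw [Nat.cast_inj] at hc
    omega
  · intro hc
    exact (WithTop.top_ne_coe) hc

lemma rdHist_eq_zero_of_gt (a : ℕ → ℕ) (n v : ℕ) (h : n < v) : rdHist a n v = 0 := by
  unfold rdHist
  rw [Finset.card_eq_zero, Finset.filter_eq_empty_iff]
  intro t ht
  rw [Finset.mem_Icc] at ht
  unfold reuseDist
  split
  · intro hc
    rw [Nat.cast_inj] at hc
    have h1 := Finset.card_image_le (s := Finset.Icc ((prevSet a t).max' (by assumption) + 1) t) (f := a)
    rw [Nat.card_Icc] at h1
    omega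
  · intro hc
    exact (WithTop.top_ne_coe) hc

/-- Histograms do not determine the trace: two distinct AI traces with the same
length and data set size can have identical reuse-time and reuse-distance
histograms. -/
theorem histograms_do_not_determine_trace :
    ∃ (n m : ℕ) (a a' : ℕ → ℕ),
      isAI a n ∧ isAI a' n ∧
      (dataSet a n).card = m ∧ (dataSet a' n).card = m ∧
      (∃ t ∈ Finset.Icc 1 n, a t ≠ a' t) ∧
      (∀ i : ℕ, 1 ≤ i → rtHist a n i = rtHist a' n i) ∧
      (∀ v : ℕ, 1 ≤ v → rdHist a n v = rdHist a' n v) := by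

  refine ⟨6, 2, fun t => [0,1,2,1,2,2,1].getD t 0, fun t => [0,1,2,2,1,2,1].getD t 0,
    ?_, ?_, ?_, ?_, ?_, ?_, ?_⟩
  · unfold isAI; decide
  · unfold isAI; decide
  · decide
  · decide
  · exact ⟨3, by decide, by decide⟩
  · intro i hi
    by_cases h : i ≤ 6
    · interval_cases i <;> decide
    · rw [rtHist_eq_zero_of_gt _ _ _ (by omega), rtHist_eq_zero_of_gt _ _ _ (by omega)]
  · intro v hv
    by_cases h : v ≤ 6
    · interval_cases v <;> decide
    · rw [rdHist_eq_zero_of_gt _ _ _ (by omega), rdHist_eq_zero_of_gt _ _ _ (by omega)]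
end

section
/- (The reuse-time histogram does not determine the reuse-distance histogram) There exist two address-independent traces of the same length n over the same number m of data items that have identical reuse-time histograms but different reuse-distance histograms. (For example the two length-19 traces over 4 items a = (1,2,3,4,3,4,1,2,3,4,3,2,3,2,3,4,3,2,1) and a' = (1,2,3,4,3,2,1,2,3,4,3,2,3,4,3,4,3,2,1).) -/
open Finset

def trA : ℕ → ℕ := fun t => [0,1,2,3,4,3,4,1,2,3,4,3,2,3,2,3,4,3,2,1].getD t 0
def trB : ℕ → ℕ := fun t => [0,1,2,3,4,3,2,1,2,3,4,3,2,3,4,3,4,3,2,1].getD t 0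

lemma rtHist_eq_zero_of_ge (a : ℕ → ℕ) (n i : ℕ) (hi : n ≤ i) : rtHist a n i = 0 := by
  rw [rtHist, Finset.card_eq_zero, Finset.filter_eq_empty_iff]
  intro t ht
  simp only [Finset.mem_Icc] at ht
  rw [reuseTime]
  split
  · rename_i h
    intro hc
    have hmem := Finset.max'_mem _ h
    simp only [prevSet, Finset.mem_filter, Finset.mem_Ico] at hmem
    have h1 : (prevSet a t).max' h ≥ 1 := hmem.1.1
    have : t - (prevSet a t).max' h = i := by exact_mod_cast hc
    omega
  · simp

/-- The reuse-time histogram does not determine the reuse-distance histogram. -/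
theorem rt_hist_does_not_determine_rd_hist :
    ∃ (n m : ℕ) (a a' : ℕ → ℕ),
      isAI a n ∧ isAI a' n ∧
      (dataSet a n).card = m ∧ (dataSet a' n).card = m ∧
      (∀ i : ℕ, 1 ≤ i → rtHist a n i = rtHist a' n i) ∧
      (∃ v : ℕ, 1 ≤ v ∧ rdHist a n v ≠ rdHist a' n v) := by
  refine ⟨19, 4, trA, trB, ?_, ?_, ?_, ?_, ?_, ⟨3, by norm_num, ?_⟩⟩
  · unfold isAI; decide
  · unfold isAI; decide
  · decide
  · decide
  · intro i hi
    rcases le_or_gt i 18 with h | h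
    · interval_cases i <;> decide
    · rw [rtHist_eq_zero_of_ge _ _ _ (by omega), rtHist_eq_zero_of_ge _ _ _ (by omega)]
  · decide
end
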